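/- arXiv:1211.6382 — 5 statements merged into one kernel-verified Lean document; each statement's English description precedes it below -/
import Mathlib

section
/- Let f > 0 and f′ be real numbers (values of the refraction profile and its derivative at ρ), and set v² = ρ²ω² + 1. If 2f² − 1 < 0 and 2f + ρ f′ ∈ [−(2f²−1)²/(4f), 0) ∪ (0, 2f), then ω₀ = ±(1/ρ)√((2f²−1±√Δ)/(2f(2f+ρf′)) − 1), with Δ = (1−2f²)² + 4f(2f+ρf′) ≥ 0, solves the equation ρω² + f f′ v⁴/(1+2f²v²) = 0 (whenever the expression under the square root is nonnegative). -/
/-!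
Writing `s = v² = ρ²ω² + 1`, we have `ρω² = (s - 1)/ρ`, so after clearing the positive
denominator `ρ(1 + 2f²s)` the equation becomes the quadratic
`f(2f + ρf′) s² - (2f² - 1) s - 1 = 0`, whose discriminant is `Δ`. The sign conditions
make its leading coefficient nonzero and `Δ ≥ 0`, so the quadratic formula gives the two
roots `s`, and `ω₀` is exactly the choice with `ρ²ω₀² + 1 = s`.
-/

open Real

lemma discrim_nonneg_of_neg_sq_div_le {f A : ℝ} (hf : 0 < f)
    (h : -(2 * f ^ 2 - 1) ^ 2 / (4 * f) ≤ A) :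
    0 ≤ (1 - 2 * f ^ 2) ^ 2 + 4 * f * A := by
  rw [div_le_iff₀ (by positivity)] at h
  nlinarith

lemma helix_equation_eq_zero_iff {ρ f f' ω : ℝ} (hρ : ρ ≠ 0)
    (hden : 1 + 2 * f ^ 2 * (ρ ^ 2 * ω ^ 2 + 1) ≠ 0) :
    ρ * ω ^ 2 + f * f' * (ρ ^ 2 * ω ^ 2 + 1) ^ 2 / (1 + 2 * f ^ 2 * (ρ ^ 2 * ω ^ 2 + 1)) = 0 ↔
      f * (2 * f + ρ * f') * (ρ ^ 2 * ω ^ 2 + 1) ^ 2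
        - (2 * f ^ 2 - 1) * (ρ ^ 2 * ω ^ 2 + 1) - 1 = 0 := by
  rw [← mul_left_inj' (mul_ne_zero hρ hden), zero_mul]
  constructor <;> intro h
  · field_simp at h
    linear_combination h
  · field_simp
    linear_combination h

lemma helix_quadratic_root {f A Δ ε : ℝ} (hf : f ≠ 0) (hA : A ≠ 0)
    (hΔ : Δ = (1 - 2 * f ^ 2) ^ 2 + 4 * f * A) (hΔ0 : 0 ≤ Δ) (hε : ε = 1 ∨ ε = -1) :
    f * A * ((2 * f ^ 2 - 1 + ε * √Δ) / (2 * f * A)) ^ 2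
      - (2 * f ^ 2 - 1) * ((2 * f ^ 2 - 1 + ε * √Δ) / (2 * f * A)) - 1 = 0 := by
  have hdiscrim : discrim (f * A) (-(2 * f ^ 2 - 1)) (-1) = (ε * √Δ) * (ε * √Δ) := by
    have hε2 : ε * ε = 1 := by rcases hε with rfl | rfl <;> norm_num
    rw [discrim, mul_mul_mul_comm, hε2, one_mul, mul_self_sqrt hΔ0, hΔ]
    ring
  have hroot := (quadratic_eq_zero_iff (mul_ne_zero hf hA) hdiscrim
    ((2 * f ^ 2 - 1 + ε * √Δ) / (2 * f * A))).mpr (Or.inl (by ring_nf))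
  linear_combination hroot

lemma sq_inv_mul_sqrt_add_one {ρ ε t : ℝ} (hρ : ρ ≠ 0) (hε : ε = 1 ∨ ε = -1) (ht : 0 ≤ t) :
    ρ ^ 2 * (ε * (1 / ρ) * √t) ^ 2 + 1 = t + 1 := by
  have hε2 : ε ^ 2 = 1 := by rcases hε with rfl | rfl <;> norm_num
  rw [mul_pow, mul_pow, hε2, sq_sqrt ht]
  field_simp

theorem helix_angular_velocity_solutions_general
    (ρ f f' : ℝ) (hρ : 0 < ρ) (hf : 0 < f)
    (Δ : ℝ) (hΔ : Δ = (1 - 2 * f ^ 2) ^ 2 + 4 * f * (2 * f + ρ * f'))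
    (h2 : 2 * f + ρ * f' ∈
      Set.Ico (-(2 * f ^ 2 - 1) ^ 2 / (4 * f)) 0 ∪ Set.Ioo 0 (2 * f))
    (ε₁ ε₂ : ℝ) (hε₁ : ε₁ = 1 ∨ ε₁ = -1) (hε₂ : ε₂ = 1 ∨ ε₂ = -1)
    (hinner : 0 ≤ (2 * f ^ 2 - 1 + ε₂ * Real.sqrt Δ) / (2 * f * (2 * f + ρ * f')) - 1) :
    0 ≤ Δ ∧
    ∀ ω : ℝ,
      ω = ε₁ * (1 / ρ) *
        Real.sqrt ((2 * f ^ 2 - 1 + ε₂ * Real.sqrt Δ) / (2 * f * (2 * f + ρ * f')) - 1) →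
      ρ * ω ^ 2 + f * f' * (ρ ^ 2 * ω ^ 2 + 1) ^ 2
          / (1 + 2 * f ^ 2 * (ρ ^ 2 * ω ^ 2 + 1)) = 0 := by
  obtain ⟨hA, hA_ge⟩ : 2 * f + ρ * f' ≠ 0 ∧ -(2 * f ^ 2 - 1) ^ 2 / (4 * f) ≤ 2 * f + ρ * f' := by
    rcases h2 with h | h
    · exact ⟨h.2.ne, h.1⟩
    · exact ⟨h.1.ne', le_trans (by rw [neg_div]; exact neg_nonpos.mpr (by positivity)) h.1.le⟩
  have hΔ0 : 0 ≤ Δ := hΔ ▸ discrim_nonneg_of_neg_sq_div_le hf hA_ge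
  refine ⟨hΔ0, fun ω hω => ?_⟩
  set s := (2 * f ^ 2 - 1 + ε₂ * √Δ) / (2 * f * (2 * f + ρ * f'))
  have hv : ρ ^ 2 * ω ^ 2 + 1 = s := by
    rw [hω, sq_inv_mul_sqrt_add_one hρ.ne' hε₁ hinner, sub_add_cancel]
  rw [helix_equation_eq_zero_iff hρ.ne' (by rw [hv]; nlinarith), hv]
  exact helix_quadratic_root hf.ne' hA hΔ hΔ0 hε₂

/-- under the stated sign conditions (`2f² − 1 < 0` and
`2f + ρf′ ∈ [−(2f²−1)²/(4f), 0) ∪ (0, 2f)`), the discriminant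
`Δ = (1−2f²)² + 4f(2f+ρf′)` is nonnegative, and
`ω₀ = ±(1/ρ)√((2f²−1±√Δ)/(2f(2f+ρf′)) − 1)` solves `ρω² + f f′ v⁴/(1+2f²v²) = 0`
with `v² = ρ²ω² + 1`, whenever the expression under the square root is nonnegative. -/
theorem helix_angular_velocity_solutions
    (ρ f f' : ℝ) (hρ : 0 < ρ) (hf : 0 < f)
    (Δ : ℝ) (hΔ : Δ = (1 - 2 * f ^ 2) ^ 2 + 4 * f * (2 * f + ρ * f'))
    (h1 : 2 * f ^ 2 - 1 < 0)
    (h2 : 2 * f + ρ * f' ∈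
      Set.Ico (-(2 * f ^ 2 - 1) ^ 2 / (4 * f)) 0 ∪ Set.Ioo 0 (2 * f))
    (ε₁ ε₂ : ℝ) (hε₁ : ε₁ = 1 ∨ ε₁ = -1) (hε₂ : ε₂ = 1 ∨ ε₂ = -1)
    (hinner : 0 ≤ (2 * f ^ 2 - 1 + ε₂ * Real.sqrt Δ) / (2 * f * (2 * f + ρ * f')) - 1) :
    0 ≤ Δ ∧
    ∀ ω : ℝ,
      ω = ε₁ * (1 / ρ) *
        Real.sqrt ((2 * f ^ 2 - 1 + ε₂ * Real.sqrt Δ) / (2 * f * (2 * f + ρ * f')) - 1) →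
      ρ * ω ^ 2 + f * f' * (ρ ^ 2 * ω ^ 2 + 1) ^ 2
          / (1 + 2 * f ^ 2 * (ρ ^ 2 * ω ^ 2 + 1)) = 0 :=
  helix_angular_velocity_solutions_general ρ f f' hρ hf Δ hΔ h2 ε₁ ε₂ hε₁ hε₂ hinner
end

section
/- In cylindrical symmetry γ = f(ρ), if ρ₀ > 0 satisfies f′(ρ₀) = 0, then for any φ₀ ∈ [0,2π] the straight line x¹(t) = ρ₀ cos φ₀, x²(t) = ρ₀ sin φ₀, x³(t) = t (a generator of the right circular cylinder (x¹)² + (x²)² = ρ₀²) is a solution of the anisotropic equations of motion. -/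
/-- in cylindrical symmetry `γ = f(ρ)`, if `f′(ρ₀) = 0` with `ρ₀ > 0`, then
the generator line `x(t) = (ρ₀ cos φ₀, ρ₀ sin φ₀, t)` of the right circular cylinder
`(x¹)² + (x²)² = ρ₀²` solves the anisotropic equations of motion. -/
theorem cylinder_generator_is_solution
    (f f' : ℝ → ℝ) (hf : ∀ r > (0:ℝ), HasDerivAt f (f' r) r)
    (hfpos : ∀ r > (0:ℝ), 0 < f r)
    (ρ₀ : ℝ) (hρ₀ : 0 < ρ₀) (hcrit : f' ρ₀ = 0)
    (φ₀ : ℝ) (hφ₀ : φ₀ ∈ Set.Icc (0:ℝ) (2 * Real.pi))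
    (x : ℝ → Fin 3 → ℝ)
    (hx : ∀ t, x t = ![ρ₀ * Real.cos φ₀, ρ₀ * Real.sin φ₀, t])
    (V : ℝ → Fin 3 → ℝ) (hV : ∀ t i, V t i = deriv (fun s => x s i) t)
    (v : ℝ → ℝ) (hvel : ∀ t, (v t) ^ 2 = ∑ i, V t i ^ 2)
    (γgrad : ℝ → Fin 3 → ℝ)
    (hγgrad : ∀ t, γgrad t = ![f' ρ₀ * (x t 0 / ρ₀), f' ρ₀ * (x t 1 / ρ₀), 0]) :
    ∀ t : ℝ, ∀ i, deriv (fun s => V s i) t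
      + (4 * f ρ₀ * (v t) ^ 2 * (1 + 3 * (f ρ₀) ^ 2 * (v t) ^ 2)
          / ((1 + 2 * (f ρ₀) ^ 2 * (v t) ^ 2) * (1 + 6 * (f ρ₀) ^ 2 * (v t) ^ 2)))
          * (∑ s, γgrad t s * V t s) * V t i
      - (f ρ₀ * (v t) ^ 4 / (1 + 2 * (f ρ₀) ^ 2 * (v t) ^ 2)) * γgrad t i = 0 := by
  have hγ0 : ∀ t i, γgrad t i = 0 := by
    intro t i
    rw [hγgrad]
    fin_cases i <;> simp [hcrit]
  have hVconst : ∀ s i, V s i = ![(0:ℝ), 0, 1] i := by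
    intro s i
    rw [hV]
    fin_cases i
    · have : (fun u => x u 0) = fun _ => ρ₀ * Real.cos φ₀ := by
        funext u; rw [hx]; simp
      simp [this]
    · have : (fun u => x u 1) = fun _ => ρ₀ * Real.sin φ₀ := by
        funext u; rw [hx]; simp
      simp [this]
    · have : (fun u => x u 2) = fun u => u := by
        funext u; rw [hx]; simp
      simp [this]
  intro t i
  have hd : deriv (fun s => V s i) t = 0 := by
    have : (fun s => V s i) = fun _ => ![(0:ℝ), 0, 1] i := by
      funext s; exact hVconst s i
    simp [this]
  rw [hd, hγ0]
  simp [hγ0]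
end

section
/- In cylindrical symmetry γ = f(ρ), if ρ₀ > 0 satisfies 1 + 2f(ρ₀)²ρ₀² + f(ρ₀)f′(ρ₀)ρ₀³ = 0, then for any ζ₀ ∈ ℝ the circle x¹(t) = ρ₀ cos t, x²(t) = ρ₀ sin t, x³(t) = ζ₀ (a circle in a plane parallel to xOy with center on the Oz axis) is a solution of the anisotropic equations of motion. -/
/-!
Along the circle the velocity `(-ρ₀ sin t, ρ₀ cos t, 0)` is tangential while the gradient of
`γ = f(ρ)` is radial, so `γ_s V^s = 0` and the middle term drops out. What is left is the radial
balance between the centripetal acceleration `-ρ₀ (cos t, sin t, 0)` and the force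
`f v⁴ / (1 + 2 f² v²) · f′ (cos t, sin t, 0)` with `v² = ρ₀²`, which is exactly the condition on `ρ₀`.
-/

open Real

lemma hasDerivAt_horizontalCircle (ρ ζ t : ℝ) :
    HasDerivAt (fun s => ![ρ * cos s, ρ * sin s, ζ]) ![-(ρ * sin t), ρ * cos t, 0] t := by
  refine hasDerivAt_pi.2 fun i => ?_
  fin_cases i
  · exact ((hasDerivAt_cos t).const_mul ρ).congr_deriv (by simp)
  · exact (hasDerivAt_sin t).const_mul ρ
  · exact hasDerivAt_const t ζ

lemma hasDerivAt_horizontalCircle_velocity (ρ t : ℝ) :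
    HasDerivAt (fun s => ![-(ρ * sin s), ρ * cos s, 0]) ![-(ρ * cos t), -(ρ * sin t), 0] t := by
  refine hasDerivAt_pi.2 fun i => ?_
  fin_cases i
  · exact ((hasDerivAt_sin t).const_mul ρ).neg
  · exact ((hasDerivAt_cos t).const_mul ρ).congr_deriv (by simp)
  · exact hasDerivAt_const t 0

lemma sum_sq_horizontalCircle_velocity (ρ t : ℝ) :
    ∑ i, ![-(ρ * sin t), ρ * cos t, 0] i ^ 2 = ρ ^ 2 := by
  simp only [Fin.sum_univ_three, Matrix.cons_val]
  linear_combination ρ ^ 2 * sin_sq_add_cos_sq t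

lemma sum_radial_mul_horizontalCircle_velocity (c ρ t : ℝ) :
    ∑ i, ![c * cos t, c * sin t, 0] i * ![-(ρ * sin t), ρ * cos t, 0] i = 0 := by
  simp only [Fin.sum_univ_three, Matrix.cons_val]
  ring

lemma centripetal_balance {a b ρ : ℝ} (h : 1 + 2 * a ^ 2 * ρ ^ 2 + a * b * ρ ^ 3 = 0) :
    ρ + a * ρ ^ 4 / (1 + 2 * a ^ 2 * ρ ^ 2) * b = 0 := by
  have hden : 1 + 2 * a ^ 2 * ρ ^ 2 ≠ 0 := by positivity
  field_simp
  linear_combination ρ * h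

theorem horizontal_circle_is_solution_general
    (f f' : ℝ → ℝ)
    (ρ₀ : ℝ) (hρ₀ : 0 < ρ₀)
    (hcond : 1 + 2 * (f ρ₀) ^ 2 * ρ₀ ^ 2 + f ρ₀ * f' ρ₀ * ρ₀ ^ 3 = 0)
    (ζ₀ : ℝ)
    (x : ℝ → Fin 3 → ℝ)
    (hx : ∀ t, x t = ![ρ₀ * Real.cos t, ρ₀ * Real.sin t, ζ₀])
    (V : ℝ → Fin 3 → ℝ) (hV : ∀ t i, V t i = deriv (fun s => x s i) t)
    (v : ℝ → ℝ) (hvel : ∀ t, (v t) ^ 2 = ∑ i, V t i ^ 2)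
    (γgrad : ℝ → Fin 3 → ℝ)
    (hγgrad : ∀ t, γgrad t = ![f' ρ₀ * (x t 0 / ρ₀), f' ρ₀ * (x t 1 / ρ₀), 0]) :
    ∀ t : ℝ, ∀ i, deriv (fun s => V s i) t
      + (4 * f ρ₀ * (v t) ^ 2 * (1 + 3 * (f ρ₀) ^ 2 * (v t) ^ 2)
          / ((1 + 2 * (f ρ₀) ^ 2 * (v t) ^ 2) * (1 + 6 * (f ρ₀) ^ 2 * (v t) ^ 2)))
          * (∑ s, γgrad t s * V t s) * V t i
      - (f ρ₀ * (v t) ^ 4 / (1 + 2 * (f ρ₀) ^ 2 * (v t) ^ 2)) * γgrad t i = 0 := by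
  have hV' : V = fun s => ![-(ρ₀ * sin s), ρ₀ * cos s, 0] := by
    ext t i
    rw [hV, funext hx]
    exact (hasDerivAt_pi.1 (hasDerivAt_horizontalCircle ρ₀ ζ₀ t) i).deriv
  have hγ : ∀ t, γgrad t = ![f' ρ₀ * cos t, f' ρ₀ * sin t, 0] := fun t => by
    simp [hγgrad, hx, hρ₀.ne']
  have hv : ∀ t, v t ^ 2 = ρ₀ ^ 2 := fun t => by
    rw [hvel, hV', sum_sq_horizontalCircle_velocity]
  have hv4 : ∀ t, v t ^ 4 = ρ₀ ^ 4 := fun t => by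
    rw [show v t ^ 4 = (v t ^ 2) ^ 2 by ring, hv]; ring
  have hbal := centripetal_balance hcond
  subst hV'
  intro t i
  rw [(hasDerivAt_pi.1 (hasDerivAt_horizontalCircle_velocity ρ₀ t) i).deriv, hγ,
    sum_radial_mul_horizontalCircle_velocity, hv, hv4]
  fin_cases i <;> simp only [Fin.zero_eta, Fin.mk_one, Fin.reduceFinMk, Matrix.cons_val]
  · linear_combination -cos t * hbal
  · linear_combination -sin t * hbal
  · ring

/-- in cylindrical symmetry `γ = f(ρ)`, if `ρ₀ > 0` satisfies
`1 + 2f(ρ₀)²ρ₀² + f(ρ₀)f′(ρ₀)ρ₀³ = 0`, then for any `ζ₀` the circle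
`x(t) = (ρ₀ cos t, ρ₀ sin t, ζ₀)` solves the anisotropic equations of motion. -/
theorem horizontal_circle_is_solution
    (f f' : ℝ → ℝ) (hf : ∀ r > (0:ℝ), HasDerivAt f (f' r) r)
    (hfpos : ∀ r > (0:ℝ), 0 < f r)
    (ρ₀ : ℝ) (hρ₀ : 0 < ρ₀)
    (hcond : 1 + 2 * (f ρ₀) ^ 2 * ρ₀ ^ 2 + f ρ₀ * f' ρ₀ * ρ₀ ^ 3 = 0)
    (ζ₀ : ℝ)
    (x : ℝ → Fin 3 → ℝ)
    (hx : ∀ t, x t = ![ρ₀ * Real.cos t, ρ₀ * Real.sin t, ζ₀])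
    (V : ℝ → Fin 3 → ℝ) (hV : ∀ t i, V t i = deriv (fun s => x s i) t)
    (v : ℝ → ℝ) (hvel : ∀ t, (v t) ^ 2 = ∑ i, V t i ^ 2)
    (γgrad : ℝ → Fin 3 → ℝ)
    (hγgrad : ∀ t, γgrad t = ![f' ρ₀ * (x t 0 / ρ₀), f' ρ₀ * (x t 1 / ρ₀), 0]) :
    ∀ t : ℝ, ∀ i, deriv (fun s => V s i) t
      + (4 * f ρ₀ * (v t) ^ 2 * (1 + 3 * (f ρ₀) ^ 2 * (v t) ^ 2)
          / ((1 + 2 * (f ρ₀) ^ 2 * (v t) ^ 2) * (1 + 6 * (f ρ₀) ^ 2 * (v t) ^ 2)))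
          * (∑ s, γgrad t s * V t s) * V t i
      - (f ρ₀ * (v t) ^ 4 / (1 + 2 * (f ρ₀) ^ 2 * (v t) ^ 2)) * γgrad t i = 0 :=
  horizontal_circle_is_solution_general f f' ρ₀ hρ₀ hcond ζ₀ x hx V hV v hvel γgrad hγgrad
end

section
/- In spherical symmetry γ = f(r) with r = ‖x‖, if r₀ > 0 satisfies 1 + f(r₀)f′(r₀)r₀³/(1+2f(r₀)²r₀²) = 0 (equivalently 1 + 2f²r₀² + f f′ r₀³ = 0), then the equatorial circle x¹(t) = r₀ cos t, x²(t) = r₀ sin t, x³(t) = 0 is a solution of the anisotropic equations of motion. -/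
/-! The circle `x(t) = r₀ (cos t, sin t, 0)` has constant speed `r₀`, velocity orthogonal to
the position (so the radial gradient `γ_s V^s` vanishes), and acceleration `-x`. The equation
of motion thus reduces to `-x^i (1 + f f' r₀³ / (1 + 2 f² r₀²)) = 0`, which is the hypothesis
on `r₀`. -/

open Real

noncomputable section

def equatorialCircle (r t : ℝ) : Fin 3 → ℝ := ![r * cos t, r * sin t, 0]

variable (r : ℝ)

theorem hasDerivAt_equatorialCircle (t : ℝ) :
    HasDerivAt (equatorialCircle r) (equatorialCircle r (t + π / 2)) t := by
  refine hasDerivAt_pi.2 fun i => ?_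
  fin_cases i
  · simpa [equatorialCircle, cos_add_pi_div_two] using (hasDerivAt_cos t).const_mul r
  · simpa [equatorialCircle, sin_add_pi_div_two] using (hasDerivAt_sin t).const_mul r
  · simpa [equatorialCircle] using hasDerivAt_const t (0 : ℝ)

theorem equatorialCircle_add_pi (t : ℝ) :
    equatorialCircle r (t + π) = -equatorialCircle r t := by
  ext i; fin_cases i <;> simp [equatorialCircle]

theorem hasDerivAt_equatorialCircle_add_pi_div_two (t : ℝ) :
    HasDerivAt (fun s => equatorialCircle r (s + π / 2)) (-equatorialCircle r t) t := by
  have h := (hasDerivAt_equatorialCircle r (t + π / 2)).comp_add_const t (π / 2)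
  rwa [add_assoc, add_halves, equatorialCircle_add_pi] at h

theorem sum_sq_equatorialCircle (t : ℝ) : ∑ i, equatorialCircle r t i ^ 2 = r ^ 2 := by
  simp only [equatorialCircle, Fin.sum_univ_three, Fin.isValue, Matrix.cons_val_zero,
    Matrix.cons_val_one, Matrix.cons_val, ne_eq, OfNat.ofNat_ne_zero, not_false_eq_true, zero_pow,
    add_zero]
  linear_combination r ^ 2 * sin_sq_add_cos_sq t

theorem sum_equatorialCircle_mul_add_pi_div_two (t : ℝ) :
    ∑ i, equatorialCircle r t i * equatorialCircle r (t + π / 2) i = 0 := by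
  simp only [equatorialCircle, cos_add_pi_div_two, mul_neg, sin_add_pi_div_two, Fin.sum_univ_three,
    Fin.isValue, Matrix.cons_val_zero, Matrix.cons_val_one, Matrix.cons_val, mul_zero, add_zero]
  ring

end

theorem neg_sub_mul_radial_eq_zero {a b r v y : ℝ} (hr : r ≠ 0) (hv : v ^ 2 = r ^ 2)
    (h : 1 + a * b * r ^ 3 / (1 + 2 * a ^ 2 * r ^ 2) = 0) :
    -y - a * v ^ 4 / (1 + 2 * a ^ 2 * v ^ 2) * (b * (y / r)) = 0 := by
  have hD : 1 + 2 * a ^ 2 * r ^ 2 ≠ 0 := by positivity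
  have h' : a * b * r ^ 3 = -(1 + 2 * a ^ 2 * r ^ 2) := by
    field_simp at h; linarith
  rw [show v ^ 4 = (v ^ 2) ^ 2 by ring, hv]
  field_simp
  linear_combination (-y) * h'

theorem equatorial_circle_is_solution_general
    (f f' : ℝ → ℝ)
    (r₀ : ℝ) (hr₀ : 0 < r₀)
    (hcond : 1 + f r₀ * f' r₀ * r₀ ^ 3 / (1 + 2 * (f r₀) ^ 2 * r₀ ^ 2) = 0)
    (x : ℝ → Fin 3 → ℝ)
    (hx : ∀ t, x t = ![r₀ * Real.cos t, r₀ * Real.sin t, 0])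
    (V : ℝ → Fin 3 → ℝ) (hV : ∀ t i, V t i = deriv (fun s => x s i) t)
    (v : ℝ → ℝ) (hvel : ∀ t, (v t) ^ 2 = ∑ i, V t i ^ 2)
    (γgrad : ℝ → Fin 3 → ℝ)
    (hγgrad : ∀ t i, γgrad t i = f' r₀ * (x t i / r₀)) :
    ∀ t : ℝ, ∀ i, deriv (fun s => V s i) t
      + (4 * f r₀ * (v t) ^ 2 * (1 + 3 * (f r₀) ^ 2 * (v t) ^ 2)
          / ((1 + 2 * (f r₀) ^ 2 * (v t) ^ 2) * (1 + 6 * (f r₀) ^ 2 * (v t) ^ 2)))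
          * (∑ s, γgrad t s * V t s) * V t i
      - (f r₀ * (v t) ^ 4 / (1 + 2 * (f r₀) ^ 2 * (v t) ^ 2)) * γgrad t i = 0 := by
  intro t i
  have hx' : x = equatorialCircle r₀ := funext hx
  have hV' (s : ℝ) : V s = equatorialCircle r₀ (s + π / 2) := funext fun j => by
    rw [hV, hx', (hasDerivAt_pi.1 (hasDerivAt_equatorialCircle r₀ s) j).deriv]
  have hacc : deriv (fun s => V s i) t = -x t i := by
    simp only [hV', hx']
    exact (hasDerivAt_pi.1 (hasDerivAt_equatorialCircle_add_pi_div_two r₀ t) i).deriv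
  have hspeed : v t ^ 2 = r₀ ^ 2 := by
    rw [hvel, hV', sum_sq_equatorialCircle]
  have hradial : ∑ s, γgrad t s * V t s = 0 := calc
    _ = f' r₀ / r₀ * ∑ s, x t s * V t s := by
      rw [Finset.mul_sum]; congr with s; rw [hγgrad]; ring
    _ = 0 := by rw [hx', hV', sum_equatorialCircle_mul_add_pi_div_two, mul_zero]
  rw [hacc, hradial, mul_zero, zero_mul, add_zero, hγgrad]
  exact neg_sub_mul_radial_eq_zero hr₀.ne' hspeed hcond

/-- in spherical symmetry `γ = f(r)`, if `r₀ > 0` satisfies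
`1 + f(r₀)f′(r₀)r₀³/(1+2f(r₀)²r₀²) = 0`, then the equatorial circle
`x(t) = (r₀ cos t, r₀ sin t, 0)` solves the anisotropic equations of motion. -/
theorem equatorial_circle_is_solution
    (f f' : ℝ → ℝ) (hf : ∀ r > (0:ℝ), HasDerivAt f (f' r) r)
    (hfpos : ∀ r > (0:ℝ), 0 < f r)
    (r₀ : ℝ) (hr₀ : 0 < r₀)
    (hcond : 1 + f r₀ * f' r₀ * r₀ ^ 3 / (1 + 2 * (f r₀) ^ 2 * r₀ ^ 2) = 0)
    (x : ℝ → Fin 3 → ℝ)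
    (hx : ∀ t, x t = ![r₀ * Real.cos t, r₀ * Real.sin t, 0])
    (V : ℝ → Fin 3 → ℝ) (hV : ∀ t i, V t i = deriv (fun s => x s i) t)
    (v : ℝ → ℝ) (hvel : ∀ t, (v t) ^ 2 = ∑ i, V t i ^ 2)
    (γgrad : ℝ → Fin 3 → ℝ)
    (hγgrad : ∀ t i, γgrad t i = f' r₀ * (x t i / r₀)) :
    ∀ t : ℝ, ∀ i, deriv (fun s => V s i) t
      + (4 * f r₀ * (v t) ^ 2 * (1 + 3 * (f r₀) ^ 2 * (v t) ^ 2)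
          / ((1 + 2 * (f r₀) ^ 2 * (v t) ^ 2) * (1 + 6 * (f r₀) ^ 2 * (v t) ^ 2)))
          * (∑ s, γgrad t s * V t s) * V t i
      - (f r₀ * (v t) ^ 4 / (1 + 2 * (f r₀) ^ 2 * (v t) ^ 2)) * γgrad t i = 0 :=
  equatorial_circle_is_solution_general f f' r₀ hr₀ hcond x hx V hV v hvel γgrad hγgrad
end

section
/- The vertical connection coefficients C^i_{jk} = (γ²/σ)(δ^i_j y_k + δ^i_k y_j + δ_{jk} y^i) − (2γ⁴/(στ))(‖y‖²δ_{jk} + 2y_j y_k) y^i are symmetric in the lower indices j, k, and satisfy the metricity-compatible formula C^i_{jk} = (g^{ir}/2) ∂g_{jr}/∂y^k, where g_{jr} = σδ_{jr} + 2γ² y_j y_r and g^{ir} = (1/σ)δ^{ir} − (2γ²/(στ)) y^i y^r. -/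
/-- the vertical connection coefficients `C^i_{jk}` are symmetric in `j, k`
and satisfy `C^i_{jk} = (g^{ir}/2) ∂g_{jr}/∂y^k`, where
`∂g_{jr}/∂y^k = 2γ²(y_k δ_{jr} + δ_{jk} y_r + y_j δ_{rk})`. -/
theorem vertical_connection_symmetric_and_metrical
    (γ : ℝ) (hγ : 0 < γ) (y : Fin 3 → ℝ)
    (σ τ : ℝ)
    (hσ : σ = 1/2 + γ ^ 2 * (∑ m, y m ^ 2))
    (hτ : τ = 1/2 + 3 * γ ^ 2 * (∑ m, y m ^ 2))
    (C : Fin 3 → Fin 3 → Fin 3 → ℝ)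
    (hC : ∀ i j k, C i j k =
      (γ ^ 2 / σ) * ((if i = j then 1 else 0) * y k + (if i = k then 1 else 0) * y j
        + (if j = k then 1 else 0) * y i)
      - (2 * γ ^ 4 / (σ * τ)) * ((∑ m, y m ^ 2) * (if j = k then 1 else 0)
        + 2 * y j * y k) * y i)
    (ginv : Matrix (Fin 3) (Fin 3) ℝ)
    (hginv : ∀ i r, ginv i r
      = (1/σ) * (if i = r then 1 else 0) - (2 * γ ^ 2 / (σ * τ)) * y i * y r) :
    ∀ i j k, C i j k = C i k j ∧
      C i j k = (1/2) * ∑ r, ginv i r *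
        (2 * γ ^ 2 * (y k * (if j = r then 1 else 0)
          + (if j = k then 1 else 0) * y r + y j * (if r = k then 1 else 0))) := by
  set S : ℝ := ∑ m, y m ^ 2 with hS
  have hSnn : (0:ℝ) ≤ S := Finset.sum_nonneg fun m _ => sq_nonneg _
  have hσ0 : σ ≠ 0 := by rw [hσ]; positivity
  have hτ0 : τ ≠ 0 := by rw [hτ]; positivity
  have hστ' : σ = τ - 2 * γ ^ 2 * S := by rw [hσ, hτ]; ring
  -- key auxiliary sum: ∑ r, ginv i r * y r = y i / τ
  have hkey : ∀ i : Fin 3, (∑ r, ginv i r * y r) = y i / τ := by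
    intro i
    have hδ : (∑ r, (if i = r then (1:ℝ) else 0) * y r) = y i := by simp
    have hyy : (∑ r : Fin 3, y r * y r) = S := by
      rw [hS]; exact Finset.sum_congr rfl fun r _ => (pow_two (y r)).symm
    rw [show (∑ r, ginv i r * y r)
        = (1/σ) * (∑ r, (if i = r then (1:ℝ) else 0) * y r)
          - (2 * γ ^ 2 / (σ * τ)) * y i * (∑ r : Fin 3, y r * y r) by
      rw [Finset.mul_sum, Finset.mul_sum, ← Finset.sum_sub_distrib]
      exact Finset.sum_congr rfl fun r _ => by rw [hginv]; ring]
    rw [hδ, hyy]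
    field_simp
    rw [hστ']; ring
  intro i j k
  have hsym : C i j k = C i k j := by
    rw [hC, hC]
    have : (if j = k then (1:ℝ) else 0) = (if k = j then 1 else 0) := by
      by_cases h : j = k <;> simp [h, eq_comm]
    rw [this]; ring
  refine ⟨hsym, ?_⟩
  have e1 : (∑ r, ginv i r * (y k * (if j = r then (1:ℝ) else 0))) = ginv i j * y k := by
    simp [mul_ite, mul_comm]
  have e3 : (∑ r, ginv i r * (y j * (if r = k then (1:ℝ) else 0))) = ginv i k * y j := by
    simp [mul_ite, mul_comm]
  have hexp : (∑ r, ginv i r *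
      (2 * γ ^ 2 * (y k * (if j = r then (1:ℝ) else 0)
        + (if j = k then 1 else 0) * y r + y j * (if r = k then 1 else 0))))
      = 2 * γ ^ 2 * (ginv i j * y k + (if j = k then (1:ℝ) else 0) * (y i / τ)
        + ginv i k * y j) := by
    rw [← hkey i]
    rw [show (∑ r, ginv i r *
      (2 * γ ^ 2 * (y k * (if j = r then (1:ℝ) else 0)
        + (if j = k then 1 else 0) * y r + y j * (if r = k then 1 else 0))))
      = 2 * γ ^ 2 * ((∑ r, ginv i r * (y k * (if j = r then (1:ℝ) else 0)))
        + (if j = k then (1:ℝ) else 0) * (∑ r, ginv i r * y r)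
        + (∑ r, ginv i r * (y j * (if r = k then (1:ℝ) else 0)))) by
        rw [Finset.mul_sum, ← Finset.sum_add_distrib, ← Finset.sum_add_distrib,
          Finset.mul_sum]
        refine Finset.sum_congr rfl fun r _ => by ring]
    rw [e1, e3]
  rw [hexp, hC, hginv, hginv]
  set a : ℝ := (if i = j then (1:ℝ) else 0) with ha
  set b : ℝ := (if i = k then (1:ℝ) else 0) with hb
  set c : ℝ := (if j = k then (1:ℝ) else 0) with hc
  field_simp
  rw [hστ']; ring
end
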